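/- Let f ∈ ℝ[X₁,…,Xₙ,Y] with deg_X f = d and deg_Y f = m, and f̄ its Y-homogenization in degree m. For all x₁, x₂ in the simplex Δ̃ₙ and (y,z) on the unit circle, |f̄(x₁,y,z) − f̄(x₂,y,z)| ≤ (1/2)·√n·‖f‖_•·(m+1)·d·(d+1)·‖x₁ − x₂‖ (Euclidean norm). -/
import Mathlib

open MvPolynomial

/-- Multinomial-scaled sup norm on `ℝ[X₁,…,Xₙ]`. -/
noncomputable def mnorm {n : ℕ} (f : MvPolynomial (Fin n) ℝ) : ℝ :=
  ⨆ α : Fin n →₀ ℕ, |coeff α f| / (Nat.multinomial Finset.univ α : ℝ)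

/-- Bullet norm on `ℝ[X₁,…,Xₙ,Y]` viewed as `(ℝ[X₁,…,Xₙ])[Y]`. -/
noncomputable def bnorm {n : ℕ} (f : Polynomial (MvPolynomial (Fin n) ℝ)) : ℝ :=
  ⨆ i : ℕ, mnorm (f.coeff i)

/-- Evaluation of the `Y`-homogenization (in degree `m`) of `f` at `(x, y, z)`. -/
noncomputable def evalBar {n : ℕ} (f : Polynomial (MvPolynomial (Fin n) ℝ)) (m : ℕ)
    (x : Fin n → ℝ) (y z : ℝ) : ℝ :=
  ∑ i ∈ Finset.range (m + 1), eval x (f.coeff i) * y ^ i * z ^ (m - i)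

lemma mnorm_bdd {n : ℕ} (g : MvPolynomial (Fin n) ℝ) :
    BddAbove (Set.range fun α : Fin n →₀ ℕ => |coeff α g| / (Nat.multinomial Finset.univ α : ℝ)) := by
  refine ⟨∑ β ∈ g.support, |coeff β g|, ?_⟩
  rintro _ ⟨α, rfl⟩
  dsimp only
  have h1 : (1:ℝ) ≤ (Nat.multinomial Finset.univ α : ℝ) := by
    exact_mod_cast Nat.one_le_iff_ne_zero.mpr (Nat.multinomial_pos _ _).ne'
  have h2 : |coeff α g| / (Nat.multinomial Finset.univ α : ℝ) ≤ |coeff α g| :=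
    div_le_self (abs_nonneg _) h1
  refine h2.trans ?_
  by_cases hα : α ∈ g.support
  · exact Finset.single_le_sum (f := fun β => |coeff β g|) (fun β _ => abs_nonneg _) hα
  · simp only [MvPolynomial.notMem_support_iff] at hα
    rw [hα, abs_zero]
    exact Finset.sum_nonneg fun β _ => abs_nonneg _

lemma abs_coeff_le_mnorm {n : ℕ} (g : MvPolynomial (Fin n) ℝ) (α : Fin n →₀ ℕ) :
    |coeff α g| ≤ mnorm g * (Nat.multinomial Finset.univ α : ℝ) := by
  have hpos : (0:ℝ) < (Nat.multinomial Finset.univ α : ℝ) := by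
    exact_mod_cast Nat.multinomial_pos _ _
  have := le_ciSup (mnorm_bdd g) α
  rw [div_le_iff₀ hpos] at this
  exact this.trans_eq (by rw [mnorm])

lemma mnorm_nonneg {n : ℕ} (g : MvPolynomial (Fin n) ℝ) : 0 ≤ mnorm g := by
  have := le_ciSup (mnorm_bdd g) 0
  refine le_trans ?_ this
  positivity

lemma mnorm_zero {n : ℕ} : mnorm (0 : MvPolynomial (Fin n) ℝ) = 0 := by
  simp [mnorm]

lemma mnorm_coeff_le_bnorm {n : ℕ} (f : Polynomial (MvPolynomial (Fin n) ℝ)) (i : ℕ) :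
    mnorm (f.coeff i) ≤ bnorm f := by
  have hbdd : BddAbove (Set.range fun i => mnorm (f.coeff i)) := by
    refine ⟨∑ k ∈ Finset.range (f.natDegree + 1), mnorm (f.coeff k), ?_⟩
    rintro _ ⟨k, rfl⟩
    dsimp only
    by_cases hk : k ∈ Finset.range (f.natDegree + 1)
    · exact Finset.single_le_sum (f := fun k => mnorm (f.coeff k))
        (fun _ _ => mnorm_nonneg _) hk
    · rw [Finset.mem_range, not_lt] at hk
      rw [Polynomial.coeff_eq_zero_of_natDegree_lt (by omega : f.natDegree < k), mnorm_zero]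
      exact Finset.sum_nonneg fun _ _ => mnorm_nonneg _
  exact le_ciSup hbdd i

lemma bnorm_nonneg {n : ℕ} (f : Polynomial (MvPolynomial (Fin n) ℝ)) : 0 ≤ bnorm f :=
  (mnorm_nonneg _).trans (mnorm_coeff_le_bnorm f 0)

lemma mult_step {n : ℕ} (β : Fin n →₀ ℕ) (j : Fin n) :
    (β j + 1) * Nat.multinomial Finset.univ (((β + Finsupp.single j 1) : Fin n →₀ ℕ) : Fin n → ℕ) =
      ((∑ i, β i) + 1) * Nat.multinomial Finset.univ β := by
  set α := β + Finsupp.single j 1 with hα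
  have hαi : ∀ i, α i = β i + if j = i then 1 else 0 := by
    intro i; simp [hα, Finsupp.single_apply]
  have hsum : ∑ i, α i = (∑ i, β i) + 1 := by
    simp only [hαi]; rw [Finset.sum_add_distrib]; simp
  have hprod : ∏ i, (α i).factorial = (β j + 1) * ∏ i, (β i).factorial := by
    rw [← Finset.mul_prod_erase Finset.univ (fun i => (α i).factorial) (Finset.mem_univ j),
        ← Finset.mul_prod_erase Finset.univ (fun i => (β i).factorial) (Finset.mem_univ j)]
    have h1 : (α j).factorial = (β j + 1) * (β j).factorial := by
      rw [hαi]; simp [Nat.factorial_succ]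
    have h2 : ∏ i ∈ Finset.univ.erase j, (α i).factorial
        = ∏ i ∈ Finset.univ.erase j, (β i).factorial :=
      Finset.prod_congr rfl fun i hi => by
        rw [hαi, if_neg (Finset.ne_of_mem_erase hi).symm, Nat.add_zero]
    rw [h1, h2]; ring
  have hpos : 0 < ∏ i, (β i).factorial := Finset.prod_pos fun i _ => Nat.factorial_pos _
  apply Nat.eq_of_mul_eq_mul_left hpos
  calc (∏ i, (β i).factorial) * ((β j + 1) * Nat.multinomial Finset.univ α)
      = (∏ i, (α i).factorial) * Nat.multinomial Finset.univ α := by rw [hprod]; ring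
    _ = (∑ i, α i).factorial := Nat.multinomial_spec _ _
    _ = ((∑ i, β i) + 1).factorial := by rw [hsum]
    _ = ((∑ i, β i) + 1) * (∑ i, β i).factorial := Nat.factorial_succ _
    _ = ((∑ i, β i) + 1) * ((∏ i, (β i).factorial) * Nat.multinomial Finset.univ β) := by
        rw [Nat.multinomial_spec]
    _ = (∏ i, (β i).factorial) * (((∑ i, β i) + 1) * Nat.multinomial Finset.univ β) := by ring

lemma eval_pderiv_eq {n : ℕ} (g : MvPolynomial (Fin n) ℝ) (x : Fin n → ℝ) (j : Fin n) :
    eval x (pderiv j g) = ∑ α ∈ g.support,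
      coeff α g * (α j) * ∏ i, x i ^ ((α - Finsupp.single j 1 : Fin n →₀ ℕ) i) := by
  conv_lhs => rw [← MvPolynomial.support_sum_monomial_coeff g]
  rw [map_sum, map_sum]
  refine Finset.sum_congr rfl fun α _ => ?_
  rw [pderiv_monomial, eval_monomial, Finsupp.prod_fintype _ _ (fun i => pow_zero _)]

lemma gauss_sum_real (d : ℕ) : (∑ k ∈ Finset.range d, ((k : ℝ) + 1)) = d * (d + 1) / 2 := by
  induction d with
  | zero => simp
  | succ d ih => rw [Finset.sum_range_succ, ih]; push_cast; ring

lemma eval_pderiv_bound {n d : ℕ} (g : MvPolynomial (Fin n) ℝ) (hdeg : g.totalDegree ≤ d)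
    (B : ℝ) (hB : 0 ≤ B)
    (hc : ∀ α : Fin n →₀ ℕ, |coeff α g| ≤ B * (Nat.multinomial Finset.univ α : ℝ))
    (x : Fin n → ℝ) (hx0 : ∀ i, 0 ≤ x i) (hx1 : ∑ i, x i ≤ 1) (j : Fin n) :
    |eval x (pderiv j g)| ≤ B * (d * (d + 1) / 2) := by
  classical
  set P : (Fin n → ℕ) → ℝ :=
    fun β => (((∑ i, β i : ℕ) : ℝ) + 1) * (Nat.multinomial Finset.univ β : ℝ) * ∏ i, x i ^ β i
    with hP
  have hPnonneg : ∀ β, 0 ≤ P β := by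
    intro β
    apply mul_nonneg (mul_nonneg (by positivity) (by positivity))
    exact Finset.prod_nonneg fun i _ => pow_nonneg (hx0 i) _
  set e : (Fin n →₀ ℕ) → (Fin n → ℕ) := fun α i => (α - Finsupp.single j 1 : Fin n →₀ ℕ) i with he
  set S : Finset (Fin n →₀ ℕ) := g.support.filter (fun α => α j ≠ 0) with hS
  -- step 1 : bound by sum over S of B * P (e α)
  rw [eval_pderiv_eq]
  have hterm : ∀ α ∈ S, |coeff α g * (α j) * ∏ i, x i ^ ((α - Finsupp.single j 1 : Fin n →₀ ℕ) i)|
      ≤ B * P (e α) := by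
    intro α hα
    have hαj : α j ≠ 0 := (Finset.mem_filter.mp hα).2
    set β := α - Finsupp.single j 1 with hβ
    have hβα : β + Finsupp.single j 1 = α :=
      tsub_add_cancel_of_le (Finsupp.single_le_iff.mpr (Nat.one_le_iff_ne_zero.mpr hαj))
    have hαjβ : α j = β j + 1 := by
      rw [← hβα]; simp [Finsupp.single_apply]
    have hprod0 : (0:ℝ) ≤ ∏ i, x i ^ (β i) :=
      Finset.prod_nonneg fun i _ => pow_nonneg (hx0 i) _
    have hms := mult_step β j
    rw [hβα] at hms
    have hms' : ((α j : ℝ)) * (Nat.multinomial Finset.univ α : ℝ)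
        = (((∑ i, β i : ℕ) : ℝ) + 1) * (Nat.multinomial Finset.univ β : ℝ) := by
      rw [hαjβ]
      exact_mod_cast congrArg (Nat.cast (R := ℝ)) hms
    calc |coeff α g * (α j) * ∏ i, x i ^ (β i)|
        = |coeff α g| * (α j) * ∏ i, x i ^ (β i) := by
          rw [abs_mul, abs_mul, Nat.abs_cast, abs_of_nonneg hprod0]
      _ ≤ (B * (Nat.multinomial Finset.univ α : ℝ)) * (α j) * ∏ i, x i ^ (β i) := by
          apply mul_le_mul_of_nonneg_right (mul_le_mul_of_nonneg_right (hc α) (by positivity)) hprod0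
      _ = B * P (e α) := by
          have heα : e α = ⇑β := rfl
          rw [hP, heα]
          dsimp only
          linear_combination (B * ∏ i, x i ^ β i) * hms'
  have hstep1 : |∑ α ∈ g.support,
        coeff α g * (α j) * ∏ i, x i ^ ((α - Finsupp.single j 1 : Fin n →₀ ℕ) i)|
      ≤ ∑ α ∈ S, B * P (e α) := by
    have h0 : ∑ α ∈ g.support, coeff α g * (α j) * ∏ i, x i ^ ((α - Finsupp.single j 1 : Fin n →₀ ℕ) i)
        = ∑ α ∈ S, coeff α g * (α j) * ∏ i, x i ^ ((α - Finsupp.single j 1 : Fin n →₀ ℕ) i) := by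
      rw [hS]
      refine (Finset.sum_filter_of_ne ?_).symm
      intro α _ hne hj
      apply hne
      rw [hj]
      simp
    rw [h0]
    exact (Finset.abs_sum_le_sum_abs _ _).trans (Finset.sum_le_sum hterm)
  -- step 2 : reindex by image
  have hinj : ∀ α₁ ∈ S, ∀ α₂ ∈ S, e α₁ = e α₂ → α₁ = α₂ := by
    intro α₁ h₁ α₂ h₂ hee
    have h₁j : α₁ j ≠ 0 := (Finset.mem_filter.mp h₁).2
    have h₂j : α₂ j ≠ 0 := (Finset.mem_filter.mp h₂).2
    have : (α₁ - Finsupp.single j 1 : Fin n →₀ ℕ) = (α₂ - Finsupp.single j 1 : Fin n →₀ ℕ) :=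
      DFunLike.coe_injective (funext fun i => congrFun hee i)
    have e1 := tsub_add_cancel_of_le (Finsupp.single_le_iff.mpr (Nat.one_le_iff_ne_zero.mpr h₁j))
    have e2 := tsub_add_cancel_of_le (Finsupp.single_le_iff.mpr (Nat.one_le_iff_ne_zero.mpr h₂j))
    rw [← e1, ← e2, this]
  have himg : ∑ α ∈ S, B * P (e α) = ∑ β ∈ S.image e, B * P β :=
    (Finset.sum_image (f := fun β => B * P β) hinj).symm
  -- step 3 : image is inside the biUnion of piAntidiags
  have hsub : S.image e ⊆ (Finset.range d).biUnion (fun k => Finset.piAntidiag Finset.univ k) := by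
    intro β hβ
    obtain ⟨α, hαS, rfl⟩ := Finset.mem_image.mp hβ
    have hαsupp : α ∈ g.support := (Finset.mem_filter.mp hαS).1
    have hαj : α j ≠ 0 := (Finset.mem_filter.mp hαS).2
    have hsums : ∑ i, (e α) i + 1 = ∑ i, α i := by
      have hβα : (α - Finsupp.single j 1 : Fin n →₀ ℕ) + Finsupp.single j 1 = α :=
        tsub_add_cancel_of_le (Finsupp.single_le_iff.mpr (Nat.one_le_iff_ne_zero.mpr hαj))
      conv_rhs => rw [← hβα]
      simp only [Finsupp.add_apply, Finset.sum_add_distrib]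
      have h1 : ∑ i, (Finsupp.single j 1 : Fin n →₀ ℕ) i = 1 := by
        simp [Finsupp.single_apply]
      have h2 : ∀ i, (e α) i = (α - Finsupp.single j 1 : Fin n →₀ ℕ) i := fun i => rfl
      simp only [h2]
      omega
    have hdα : ∑ i, α i ≤ d := by
      refine le_trans ?_ (le_trans (MvPolynomial.le_totalDegree hαsupp) hdeg)
      rw [Finsupp.sum_fintype _ _ (fun i => rfl)]
    refine Finset.mem_biUnion.mpr ⟨∑ i, (e α) i, Finset.mem_range.mpr (by omega), ?_⟩
    refine Finset.mem_piAntidiag.mpr ⟨rfl, fun i _ => Finset.mem_univ i⟩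
  have hstep3 : ∑ β ∈ S.image e, B * P β
      ≤ ∑ β ∈ (Finset.range d).biUnion (fun k => Finset.piAntidiag Finset.univ k), B * P β :=
    Finset.sum_le_sum_of_subset_of_nonneg hsub fun β _ _ => mul_nonneg hB (hPnonneg β)
  -- step 4 : evaluate the biUnion sum
  have hdisj : (↑(Finset.range d) : Set ℕ).PairwiseDisjoint
      (fun k => Finset.piAntidiag (Finset.univ : Finset (Fin n)) k) := by
    intro k₁ _ k₂ _ hne
    simp only [Function.onFun]
    rw [Finset.disjoint_left]
    intro β h₁ h₂
    exact hne ((Finset.mem_piAntidiag.mp h₁).1.symm.trans (Finset.mem_piAntidiag.mp h₂).1)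
  have hstep4 : ∑ β ∈ (Finset.range d).biUnion (fun k => Finset.piAntidiag Finset.univ k), B * P β
      = ∑ k ∈ Finset.range d, ∑ β ∈ Finset.piAntidiag Finset.univ k, B * P β :=
    Finset.sum_biUnion hdisj
  have hinner : ∀ k, ∑ β ∈ Finset.piAntidiag (Finset.univ : Finset (Fin n)) k, B * P β
      ≤ B * ((k : ℝ) + 1) := by
    intro k
    have : ∑ β ∈ Finset.piAntidiag (Finset.univ : Finset (Fin n)) k, B * P β
        = B * ((k:ℝ) + 1) * ∑ β ∈ Finset.piAntidiag (Finset.univ : Finset (Fin n)) k,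
            (Nat.multinomial Finset.univ β : ℝ) * ∏ i, x i ^ β i := by
      rw [Finset.mul_sum]
      refine Finset.sum_congr rfl fun β hβ => ?_
      have hsum : ∑ i, β i = k := (Finset.mem_piAntidiag.mp hβ).1
      rw [hP]; dsimp only; rw [hsum]; ring
    rw [this, ← Finset.sum_pow_eq_sum_piAntidiag Finset.univ x k]
    have hpow : (∑ i, x i) ^ k ≤ 1 :=
      pow_le_one₀ (Finset.sum_nonneg fun i _ => hx0 i) hx1
    calc B * ((k:ℝ) + 1) * (∑ i, x i) ^ k ≤ B * ((k:ℝ)+1) * 1 := by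
          apply mul_le_mul_of_nonneg_left hpow (by positivity)
      _ = B * ((k:ℝ) + 1) := mul_one _
  calc |∑ α ∈ g.support, coeff α g * (α j) * ∏ i, x i ^ ((α - Finsupp.single j 1 : Fin n →₀ ℕ) i)|
      ≤ ∑ α ∈ S, B * P (e α) := hstep1
    _ = ∑ β ∈ S.image e, B * P β := himg
    _ ≤ ∑ β ∈ (Finset.range d).biUnion (fun k => Finset.piAntidiag Finset.univ k), B * P β := hstep3
    _ = ∑ k ∈ Finset.range d, ∑ β ∈ Finset.piAntidiag Finset.univ k, B * P β := hstep4
    _ ≤ ∑ k ∈ Finset.range d, B * ((k:ℝ) + 1) := Finset.sum_le_sum fun k _ => hinner k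
    _ = B * (d * (d + 1) / 2) := by rw [← Finset.mul_sum, gauss_sum_real]

lemma derivative_aeval {n : ℕ} (φ : Fin n → Polynomial ℝ) (p : MvPolynomial (Fin n) ℝ) :
    Polynomial.derivative (aeval φ p) =
      ∑ j, aeval φ (pderiv j p) * Polynomial.derivative (φ j) := by
  classical
  induction p using MvPolynomial.induction_on with
  | C a => simp
  | add p q hp hq =>
      simp only [map_add, hp, hq, ← Finset.sum_add_distrib]
      exact Finset.sum_congr rfl fun j _ => by ring
  | mul_X p i hp =>
      simp only [map_mul, aeval_X, Polynomial.derivative_mul, hp, pderiv_mul, map_add,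
        Finset.sum_mul, Finset.sum_add_distrib]
      have hterm : ∀ j : Fin n,
          (aeval φ) ((pderiv j) p) * φ i + (aeval φ) p * (aeval φ) ((pderiv j) (X i : MvPolynomial (Fin n) ℝ))
            = (aeval φ) ((pderiv j) p) * φ i
              + (if j = i then (aeval φ) p else 0) := by
        intro j
        by_cases h : j = i
        · subst h; simp [pderiv_X_self]
        · rw [pderiv_X_of_ne (Ne.symm h)]; simp [h]
      calc ∑ j, (aeval φ) ((pderiv j) p) * Polynomial.derivative (φ j) * φ i
            + (aeval φ) p * Polynomial.derivative (φ i)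
          = ∑ j, ((aeval φ) ((pderiv j) p) * φ i + (if j = i then (aeval φ) p else 0))
              * Polynomial.derivative (φ j) := by
            rw [Finset.sum_congr rfl (fun j (_ : j ∈ Finset.univ) => show
              ((aeval φ) ((pderiv j) p) * φ i + (if j = i then (aeval φ) p else 0))
                * Polynomial.derivative (φ j)
              = (aeval φ) ((pderiv j) p) * Polynomial.derivative (φ j) * φ i
                + (if j = i then (aeval φ) p * Polynomial.derivative (φ j) else 0) by
                by_cases h : j = i <;> simp [h] <;> ring)]
            rw [Finset.sum_add_distrib]
            congr 1
            simp
        _ = ∑ j, ((aeval φ) ((pderiv j) p) * φ i + (aeval φ) p * (aeval φ) ((pderiv j) (X i : MvPolynomial (Fin n) ℝ)))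
              * Polynomial.derivative (φ j) :=
            Finset.sum_congr rfl fun j _ => by rw [hterm j]

lemma eval_aeval' {n : ℕ} (φ : Fin n → Polynomial ℝ) (p : MvPolynomial (Fin n) ℝ) (t : ℝ) :
    Polynomial.eval t (aeval φ p) = eval (fun i => (φ i).eval t) p := by
  induction p using MvPolynomial.induction_on with
  | C a => simp
  | add p q hp hq => simp [hp, hq]
  | mul_X p i hp => simp [hp]

lemma lipschitz_key {n d : ℕ} (g : MvPolynomial (Fin n) ℝ) (hdeg : g.totalDegree ≤ d)
    (B : ℝ) (hB : 0 ≤ B)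
    (hc : ∀ α : Fin n →₀ ℕ, |coeff α g| ≤ B * (Nat.multinomial Finset.univ α : ℝ))
    (x₁ x₂ : Fin n → ℝ) (hx₁0 : ∀ i, 0 ≤ x₁ i) (hx₁1 : ∑ i, x₁ i ≤ 1)
    (hx₂0 : ∀ i, 0 ≤ x₂ i) (hx₂1 : ∑ i, x₂ i ≤ 1) :
    |eval x₁ g - eval x₂ g| ≤ B * (d * (d + 1) / 2) * ∑ j, |x₁ j - x₂ j| := by
  set φ : Fin n → Polynomial ℝ :=
    fun i => Polynomial.C (x₂ i) + Polynomial.C (x₁ i - x₂ i) * Polynomial.X with hφ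
  set P : Polynomial ℝ := aeval φ g with hPdef
  have hφeval : ∀ (t : ℝ) i, (φ i).eval t = x₂ i + (x₁ i - x₂ i) * t := by
    intro t i; simp [hφ]
  have he1 : P.eval 1 = eval x₁ g := by
    rw [hPdef, eval_aeval']
    have h : (fun i => Polynomial.eval 1 (φ i)) = x₁ := funext fun i => by rw [hφeval]; ring
    rw [h]
  have he0 : P.eval 0 = eval x₂ g := by
    rw [hPdef, eval_aeval']
    have h : (fun i => Polynomial.eval 0 (φ i)) = x₂ := funext fun i => by rw [hφeval]; ring
    rw [h]
  have hD : P.derivative = ∑ j, aeval φ (pderiv j g) * Polynomial.C (x₁ j - x₂ j) := by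
    rw [hPdef, derivative_aeval]
    refine Finset.sum_congr rfl fun j _ => ?_
    congr 1
    rw [hφ]; simp
  have key : ∀ t ∈ Set.Icc (0:ℝ) 1,
      |P.derivative.eval t| ≤ B * (d * (d + 1) / 2) * ∑ j, |x₁ j - x₂ j| := by
    intro t ht
    set xt : Fin n → ℝ := fun i => x₂ i + (x₁ i - x₂ i) * t with hxt
    have hxt0 : ∀ i, 0 ≤ xt i := by
      intro i
      have hrw : xt i = (1 - t) * x₂ i + t * x₁ i := by rw [hxt]; ring
      rw [hrw]
      exact add_nonneg (mul_nonneg (by linarith [ht.2]) (hx₂0 i))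
        (mul_nonneg ht.1 (hx₁0 i))
    have hxt1 : ∑ i, xt i ≤ 1 := by
      have hrw : ∑ i, xt i = (1 - t) * ∑ i, x₂ i + t * ∑ i, x₁ i := by
        rw [Finset.mul_sum, Finset.mul_sum, ← Finset.sum_add_distrib]
        refine Finset.sum_congr rfl fun i _ => by rw [hxt]; ring
      rw [hrw]
      have h1 : (1 - t) * ∑ i, x₂ i ≤ (1 - t) * 1 :=
        mul_le_mul_of_nonneg_left hx₂1 (by linarith [ht.2])
      have h2 : t * ∑ i, x₁ i ≤ t * 1 := mul_le_mul_of_nonneg_left hx₁1 ht.1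
      linarith
    have hfun : (fun i => (φ i).eval t) = xt := funext fun i => hφeval t i
    rw [hD, Polynomial.eval_finset_sum]
    calc |∑ j, (aeval φ (pderiv j g) * Polynomial.C (x₁ j - x₂ j)).eval t|
        ≤ ∑ j, |(aeval φ (pderiv j g) * Polynomial.C (x₁ j - x₂ j)).eval t| :=
          Finset.abs_sum_le_sum_abs _ _
      _ ≤ ∑ j, B * (d * (d + 1) / 2) * |x₁ j - x₂ j| := by
          refine Finset.sum_le_sum fun j _ => ?_
          rw [Polynomial.eval_mul, Polynomial.eval_C, abs_mul, eval_aeval', hfun]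
          exact mul_le_mul_of_nonneg_right
            (eval_pderiv_bound g hdeg B hB hc xt hxt0 hxt1 j) (abs_nonneg _)
      _ = B * (d * (d + 1) / 2) * ∑ j, |x₁ j - x₂ j| := by rw [Finset.mul_sum]
  have hmvt := norm_image_sub_le_of_norm_deriv_le_segment_01'
    (f := fun t => P.eval t) (f' := fun t => P.derivative.eval t)
    (fun t _ => (P.hasDerivAt t).hasDerivWithinAt)
    (fun t ht' => by
      rw [Real.norm_eq_abs]
      exact key t ⟨ht'.1, le_of_lt ht'.2⟩)
  simpa [he1, he0] using hmvt

lemma sum_abs_le_sqrt_mul_norm {n : ℕ} (v : EuclideanSpace ℝ (Fin n)) :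
    ∑ j, |v j| ≤ Real.sqrt n * ‖v‖ := by
  have h1 : (∑ j, |v j|) ^ 2 ≤ (n : ℝ) * ∑ j, (v j) ^ 2 := by
    have h := sq_sum_le_card_mul_sum_sq (s := (Finset.univ : Finset (Fin n)))
      (f := fun j => |v j|)
    simpa [sq_abs] using h
  have hnorm : ‖v‖ = Real.sqrt (∑ j, (v j) ^ 2) := by
    rw [EuclideanSpace.norm_eq]
    congr 1
    exact Finset.sum_congr rfl fun j _ => by rw [Real.norm_eq_abs, sq_abs]
  have hnn : 0 ≤ ∑ j, |v j| := Finset.sum_nonneg fun j _ => abs_nonneg _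
  calc ∑ j, |v j| = Real.sqrt ((∑ j, |v j|) ^ 2) := (Real.sqrt_sq hnn).symm
    _ ≤ Real.sqrt ((n : ℝ) * ∑ j, (v j) ^ 2) := Real.sqrt_le_sqrt h1
    _ = Real.sqrt n * Real.sqrt (∑ j, (v j) ^ 2) := Real.sqrt_mul (by positivity) _
    _ = Real.sqrt n * ‖v‖ := by rw [hnorm]

theorem stmt_9 {n : ℕ} (f : Polynomial (MvPolynomial (Fin n) ℝ)) (d m : ℕ)
    (hd : ∀ i, (f.coeff i).totalDegree ≤ d) (hm : f.natDegree = m)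
    (x₁ x₂ : EuclideanSpace ℝ (Fin n))
    (hx₁ : (∀ i, 0 ≤ x₁ i) ∧ ∑ i, x₁ i ≤ 1)
    (hx₂ : (∀ i, 0 ≤ x₂ i) ∧ ∑ i, x₂ i ≤ 1)
    (y z : ℝ) (hyz : y ^ 2 + z ^ 2 = 1) :
    |evalBar f m (⇑x₁) y z - evalBar f m (⇑x₂) y z| ≤
      (1 / 2) * Real.sqrt n * bnorm f * (m + 1) * d * (d + 1) * ‖x₁ - x₂‖ := by
  obtain ⟨h10, h11⟩ := hx₁
  obtain ⟨h20, h21⟩ := hx₂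
  have hy : |y| ≤ 1 := by nlinarith [sq_abs y, sq_nonneg z, abs_nonneg y]
  have hz : |z| ≤ 1 := by nlinarith [sq_abs z, sq_nonneg y, abs_nonneg z]
  have hB : 0 ≤ bnorm f := bnorm_nonneg f
  set L : ℝ := bnorm f * (d * (d + 1) / 2) * ∑ j, |x₁ j - x₂ j| with hL
  have hterm : ∀ i, |eval (⇑x₁) (f.coeff i) - eval (⇑x₂) (f.coeff i)| ≤ L := by
    intro i
    refine lipschitz_key (f.coeff i) (hd i) (bnorm f) hB (fun α => ?_) x₁ x₂ h10 h11 h20 h21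
    exact (abs_coeff_le_mnorm _ α).trans
      (mul_le_mul_of_nonneg_right (mnorm_coeff_le_bnorm f i) (by positivity))
  have hL0 : 0 ≤ L := by
    have : (0:ℝ) ≤ ∑ j, |x₁ j - x₂ j| := Finset.sum_nonneg fun j _ => abs_nonneg _
    positivity
  have hsplit : evalBar f m (⇑x₁) y z - evalBar f m (⇑x₂) y z
      = ∑ i ∈ Finset.range (m + 1),
          (eval (⇑x₁) (f.coeff i) - eval (⇑x₂) (f.coeff i)) * y ^ i * z ^ (m - i) := by
    rw [evalBar, evalBar, ← Finset.sum_sub_distrib]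
    exact Finset.sum_congr rfl fun i _ => by ring
  rw [hsplit]
  have hstep : |∑ i ∈ Finset.range (m + 1),
      (eval (⇑x₁) (f.coeff i) - eval (⇑x₂) (f.coeff i)) * y ^ i * z ^ (m - i)|
      ≤ (m + 1 : ℝ) * L := by
    calc |∑ i ∈ Finset.range (m + 1),
        (eval (⇑x₁) (f.coeff i) - eval (⇑x₂) (f.coeff i)) * y ^ i * z ^ (m - i)|
        ≤ ∑ i ∈ Finset.range (m + 1),
          |(eval (⇑x₁) (f.coeff i) - eval (⇑x₂) (f.coeff i)) * y ^ i * z ^ (m - i)| :=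
          Finset.abs_sum_le_sum_abs _ _
      _ ≤ ∑ _i ∈ Finset.range (m + 1), L := by
          refine Finset.sum_le_sum fun i _ => ?_
          rw [abs_mul, abs_mul, abs_pow, abs_pow]
          calc |eval (⇑x₁) (f.coeff i) - eval (⇑x₂) (f.coeff i)| * |y| ^ i * |z| ^ (m - i)
              ≤ L * 1 * 1 := by
                apply mul_le_mul
                · apply mul_le_mul (hterm i) (pow_le_one₀ (abs_nonneg _) hy)
                    (by positivity) hL0
                · exact pow_le_one₀ (abs_nonneg _) hz
                · positivity
                · exact mul_nonneg hL0 zero_le_one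
            _ = L := by ring
      _ = (m + 1 : ℝ) * L := by
          rw [Finset.sum_const, Finset.card_range]
          push_cast
          ring
  refine hstep.trans ?_
  have hsum : ∑ j, |x₁ j - x₂ j| ≤ Real.sqrt n * ‖x₁ - x₂‖ := by
    have h := sum_abs_le_sqrt_mul_norm (x₁ - x₂)
    have hco : ∀ j, (x₁ - x₂) j = x₁ j - x₂ j := fun j => rfl
    simpa [hco] using h
  calc (m + 1 : ℝ) * L
      ≤ (m + 1 : ℝ) * (bnorm f * (d * (d + 1) / 2) * (Real.sqrt n * ‖x₁ - x₂‖)) := by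
        apply mul_le_mul_of_nonneg_left _ (by positivity)
        apply mul_le_mul_of_nonneg_left hsum (by positivity)
    _ = (1 / 2) * Real.sqrt n * bnorm f * (m + 1) * d * (d + 1) * ‖x₁ - x₂‖ := by ring
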